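/- Let q = p^s with p an odd prime and n an odd positive integer. The number of elements α ∈ F_{q^n} such that both α and Tr(α) are squares in F_{q^n} (including 0) equals (q^n + q^{n−1} + τ^{s(n−1)}·(q−1)·q^{(n−1)/2} + 2)/4, where τ = 1 if p ≡ 1 (mod 4) and τ = i if p ≡ 3 (mod 4). -/

import Mathlib

/-!
The indicator of the squares of a finite field of odd characteristic is `(1 + χ + δ₀) / 2`, so four
times the count is a sum over `α ∈ 𝔽_{q^n}` of nine products of such terms. The trace is onto with
fibres of size `q^{n-1}`, and for odd `n` an element of `𝔽_q` is a square in `𝔽_{q^n}` only if it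
is one in `𝔽_q` (take norms); this disposes of every product except
`∑ χₙ(α) χ(Tr α) = ∑_y χ(Tr y²)`. Diagonalising the trace form as `∑ wᵢ xᵢ²` and summing one
variable at a time gives `(q - 1) q^{(n-1)/2} χ(-1)^{(n-1)/2} χ(∏ wᵢ)`. Here `∏ wᵢ` is a
discriminant `det(σⱼ bᵢ)²` of `𝔽_{q^n}/𝔽_q`, and it is a square in `𝔽_q`: an automorphism permutes
the columns `σⱼ` by left multiplication in a group of odd order, hence evenly, so it fixes
`det(σⱼ bᵢ)`. Finally `χ(-1) = χ₄(q)` and `τ² = χ₄(p)`.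
-/

/-- `τ = 1` if `p ≡ 1 (mod 4)`, `τ = i` if `p ≡ 3 (mod 4)`. -/
noncomputable def tauC (p : ℕ) : ℂ := if p % 4 = 1 then 1 else Complex.I

open Finset Module

lemma Fin.sum_pi_cons {α M : Type*} [Fintype α] [AddCommMonoid M] {k : ℕ}
    (g : (Fin (k + 1) → α) → M) : ∑ x, g x = ∑ u, ∑ y : Fin k → α, g (Fin.cons u y) := by
  rw [← Fintype.sum_prod_type']
  exact (Fintype.sum_equiv (Fin.consEquiv fun _ => α) _ _ fun _ => rfl).symm

namespace FiniteField

variable {F : Type*} [Field F] [Fintype F]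

lemma sum_comp_add_mul {M : Type*} [AddCommMonoid M] (g : F → M) {w : F} (hw : w ≠ 0) (a : F) :
    ∑ t, g (a + w * t) = ∑ s, g s :=
  Fintype.sum_equiv ((Equiv.mulLeft₀ w hw).trans (Equiv.addLeft a)) _ _ fun _ => rfl

variable [DecidableEq F]

variable (F) in
-- the function `v` of Lidl–Niederreiter, *Finite Fields*, Chapter 6
def nu (a : F) : ℤ := if a = 0 then Fintype.card F - 1 else -1

lemma nu_eq (a : F) : nu F a = Fintype.card F * (if a = 0 then 1 else 0) - 1 := by
  unfold nu; split_ifs <;> ring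

lemma sum_nu : ∑ a, nu F a = 0 := by
  simp [nu_eq, Finset.sum_sub_distrib]

lemma sum_quadraticChar_mul_comp_mul (f : F → ℤ) {w : F} (hw : w ≠ 0) :
    ∑ t, quadraticChar F t * f (w * t) = quadraticChar F w * ∑ s, quadraticChar F s * f s := by
  calc ∑ t, quadraticChar F t * f (w * t)
      = quadraticChar F w * ∑ t, quadraticChar F (w * t) * f (w * t) := by
        rw [Finset.mul_sum]
        refine Finset.sum_congr rfl fun t _ => ?_
        rw [map_mul]
        linear_combination -quadraticChar F t * f (w * t) * quadraticChar_sq_one hw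
    _ = quadraticChar F w * ∑ s, quadraticChar F s * f s := by
        congr 1
        exact Fintype.sum_equiv (Equiv.mulLeft₀ w hw) _ _ fun _ => rfl

lemma sum_comp_sq (hF : ringChar F ≠ 2) {M : Type*} [AddCommGroup M] (f : F → M) :
    ∑ x, f (x ^ 2) = ∑ t, (quadraticChar F t + 1) • f t := by
  rw [← Finset.sum_fiberwise univ (· ^ 2)]
  refine Finset.sum_congr rfl fun t _ => ?_
  rw [Finset.sum_congr rfl fun x hx => congrArg f (Finset.mem_filter.mp hx).2, Finset.sum_const,
    ← quadraticChar_card_sqrts hF, Set.toFinset_ofPred, natCast_zsmul]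

lemma sum_quadraticChar_mul_quadraticChar_add (hF : ringChar F ≠ 2) (a : F) :
    ∑ s, quadraticChar F s * quadraticChar F (s + a) = nu F a := by
  by_cases ha : a = 0
  · subst ha
    have : ∀ s : F, quadraticChar F s * quadraticChar F (s + 0) = 1 - if s = 0 then 1 else 0 :=
      fun s => by
        by_cases hs : s = 0
        · simp [hs]
        · rw [add_zero, ← sq, quadraticChar_sq_one hs, if_neg hs, sub_zero]
    rw [Finset.sum_congr rfl fun s _ => this s]
    simp [nu, Finset.sum_sub_distrib]
  -- `s = -a x` turns the sum into `χ(-1)` times the Jacobi sum `J(χ, χ) = -χ(-1)`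
  · have hJ := jacobiSum_nontrivial_inv (quadraticChar_ne_one hF)
    rw [(quadraticChar_isQuadratic F).inv, jacobiSum] at hJ
    have hsub : ∀ x : F, quadraticChar F (-a * x) * quadraticChar F (-a * x + a)
        = quadraticChar F (-1) * (quadraticChar F x * quadraticChar F (1 - x)) := fun x => by
      rw [show -a * x + a = a * (1 - x) by ring, show -a * x = -1 * (a * x) by ring,
        map_mul, map_mul, map_mul]
      linear_combination quadraticChar F (-1) * quadraticChar F x * quadraticChar F (1 - x) *
        quadraticChar_sq_one ha
    rw [← Fintype.sum_equiv (Equiv.mulLeft₀ (-a) (neg_ne_zero.mpr ha)) _ _ fun x => hsub x |>.symm,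
      ← Finset.mul_sum, hJ, nu, if_neg ha]
    linear_combination -quadraticChar_sq_one (neg_ne_zero.mpr (one_ne_zero (α := F)))

lemma sum_quadraticChar_add_mul_sq (hF : ringChar F ≠ 2) {w : F} (hw : w ≠ 0) (a : F) :
    ∑ x, quadraticChar F (a + w * x ^ 2) = quadraticChar F w * nu F a := by
  rw [sum_comp_sq hF fun t => quadraticChar F (a + w * t)]
  simp only [smul_eq_mul, add_mul, one_mul, Finset.sum_add_distrib,
    sum_comp_add_mul (quadraticChar F) hw, quadraticChar_sum_zero hF, add_zero,
    sum_quadraticChar_mul_comp_mul (fun u => quadraticChar F (a + u)) hw]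
  simp only [add_comm a, sum_quadraticChar_mul_quadraticChar_add hF]

lemma sum_nu_add_mul_sq (hF : ringChar F ≠ 2) {w : F} (hw : w ≠ 0) (a : F) :
    ∑ x, nu F (a + w * x ^ 2) = Fintype.card F * quadraticChar F (-w) * quadraticChar F a := by
  rw [sum_comp_sq hF fun t => nu F (a + w * t)]
  simp only [smul_eq_mul, add_mul, one_mul, Finset.sum_add_distrib,
    sum_comp_add_mul (nu F) hw, sum_nu, add_zero,
    sum_quadraticChar_mul_comp_mul (fun u => nu F (a + u)) hw]
  simp only [nu_eq, mul_sub, mul_one, Finset.sum_sub_distrib, quadraticChar_sum_zero hF,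
    add_eq_zero_iff_eq_neg', mul_ite, mul_one, mul_zero, Finset.sum_ite_eq', Finset.mem_univ, if_true,
    neg_eq_neg_one_mul a, neg_eq_neg_one_mul w, map_mul]
  ring

lemma sum_quadraticChar_add_diagonal (hF : ringChar F ≠ 2) {k : ℕ} (w : Fin k → F)
    (hw : ∀ i, w i ≠ 0) (a : F) :
    ∑ x : Fin k → F, quadraticChar F (a + ∑ i, w i * x i ^ 2)
      = Fintype.card F ^ (k / 2) * quadraticChar F ((-1) ^ (k / 2) * ∏ i, w i)
          * if Even k then quadraticChar F a else nu F a := by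
  induction k generalizing a with
  | zero => simp
  | succ k ih =>
    rw [Fin.sum_pi_cons]
    simp only [Fin.sum_univ_succ, Fin.cons_zero, Fin.cons_succ, ← add_assoc]
    simp_rw [ih (fun i => w i.succ) (fun i => hw _), ← Finset.mul_sum, Fin.prod_univ_succ]
    obtain ⟨j, rfl | rfl⟩ := Nat.even_or_odd' k
    · have hodd : ¬Even (2 * j + 1) := Nat.not_even_iff_odd.mpr (odd_two_mul_add_one j)
      simp only [if_pos (even_two_mul j), if_neg hodd, sum_quadraticChar_add_mul_sq hF (hw 0),
        show (2 * j + 1) / 2 = 2 * j / 2 by omega, map_mul]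
      ring
    · have hodd : ¬Even (2 * j + 1) := Nat.not_even_iff_odd.mpr (odd_two_mul_add_one j)
      have heven : Even (2 * j + 1 + 1) := ⟨j + 1, by ring⟩
      simp only [if_neg hodd, if_pos heven]
      rw [sum_nu_add_mul_sq hF (hw 0)]
      simp only [show (2 * j + 1 + 1) / 2 = (2 * j + 1) / 2 + 1 by omega, neg_eq_neg_one_mul (w 0),
        map_mul, pow_succ]
      ring

end FiniteField

lemma Equiv.Perm.sign_mulLeft_of_odd_card {G : Type*} [Group G] [Fintype G] [DecidableEq G]
    (hG : Odd (Fintype.card G)) (g : G) : Equiv.Perm.sign (Equiv.mulLeft g) = 1 := by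
  let f : G →* ℤˣ := Equiv.Perm.sign.comp (MulAction.toPermHom G G)
  have hf : f g ^ Fintype.card G = 1 := by rw [← map_pow, pow_card_eq_one, map_one]
  change f g = 1
  rcases Int.units_eq_one_or (f g) with h | h
  · exact h
  · rw [h, hG.neg_one_pow] at hf
    exact absurd hf (by decide)

lemma Algebra.isSquare_discr_of_odd_finrank {K L : Type*} [Field K] [Field L] [Algebra K L]
    [FiniteDimensional K L] [IsGalois K L] (hn : Odd (finrank K L)) {ι : Type*} [Fintype ι]
    [DecidableEq ι] (b : ι → L) (hι : Fintype.card ι = finrank K L) :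
    IsSquare (Algebra.discr K b) := by
  classical
  have hG : Fintype.card Gal(L/K) = finrank K L := by
    rw [← Nat.card_eq_fintype_card, IsGalois.card_aut_eq_finrank]
  let e : ι ≃ Gal(L/K) := Fintype.equivOfCardEq (hι.trans hG.symm)
  let M : Matrix ι ι L := fun i j => e j (b i)
  have htrace : (Algebra.traceMatrix K b).map (algebraMap K L) = M * M.transpose := by
    ext i j
    rw [Matrix.map_apply, Algebra.traceMatrix_apply, Algebra.traceForm_apply,
      trace_eq_sum_automorphisms, Matrix.mul_apply]
    exact (Fintype.sum_equiv e _ _ fun σ => (map_mul (e σ) (b i) (b j)).symm).symm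
  -- `σ` permutes the columns of `M` by left multiplication, which is even in a group of odd order
  have hfixed : ∀ σ : Gal(L/K), σ M.det = M.det := fun σ => by
    have hperm : σ.toRingHom.mapMatrix M
        = M.submatrix _root_.id ((e.trans (Equiv.mulLeft σ)).trans e.symm) := by
      ext i j
      change σ (e j (b i)) = e (e.symm (σ * e j)) (b i)
      rw [Equiv.apply_symm_apply, AlgEquiv.mul_apply]
    have hsign : Equiv.Perm.sign ((e.trans (Equiv.mulLeft σ)).trans e.symm) = 1 := by
      rw [← Equiv.symm_symm e, Equiv.symm_symm e.symm, Equiv.Perm.sign_symm_trans_trans]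
      exact Equiv.Perm.sign_mulLeft_of_odd_card (hG ▸ hn) σ
    have := RingHom.map_det σ.toRingHom M
    rw [hperm, Matrix.det_permute', hsign] at this
    simpa using this
  obtain ⟨d, hd⟩ := IntermediateField.mem_bot.mp ((IsGalois.mem_bot_iff_fixed _).mpr hfixed)
  refine ⟨d, (algebraMap K L).injective ?_⟩
  rw [map_mul, hd, Algebra.discr_def, RingHom.map_det, RingHom.mapMatrix_apply, htrace,
    Matrix.det_mul, Matrix.det_transpose]

lemma Algebra.trace_sq_of_isOrthoᵢ {R S ι : Type*} [CommRing R] [CommRing S] [Algebra R S]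
    [Fintype ι] (v : Basis ι R S) (hv : (Algebra.traceForm R S).IsOrthoᵢ v) (x : ι → R) :
    Algebra.trace R S ((∑ i, x i • v i) ^ 2) = ∑ i, Algebra.trace R S (v i * v i) * x i ^ 2 := by
  rw [sq, ← Algebra.traceForm_apply]
  simp only [map_sum, LinearMap.sum_apply, map_smul, LinearMap.smul_apply, smul_eq_mul]
  refine Finset.sum_congr rfl fun i _ => ?_
  rw [Finset.sum_eq_single i (fun j _ hji => by rw [hv hji, mul_zero])
    (by simp), Algebra.traceForm_apply]
  ring

lemma FiniteField.sum_quadraticChar_trace_sq {K L : Type*} [Field K] [Field L] [Fintype K]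
    [Fintype L] [Algebra K L] [DecidableEq K] (hK : ringChar K ≠ 2) (hn : Odd (finrank K L)) :
    ∑ y : L, quadraticChar K (Algebra.trace K L (y ^ 2))
      = Fintype.card K ^ (finrank K L / 2) * quadraticChar K (-1) ^ (finrank K L / 2)
          * (Fintype.card K - 1) := by
  have : Invertible (2 : K) := invertibleOfNonzero (Ring.two_ne_zero hK)
  obtain ⟨v, hv⟩ := LinearMap.BilinForm.exists_orthogonal_basis
    (LinearMap.BilinForm.isSymm_iff.mp (Algebra.traceForm_isSymm K (S := L)))
  set w := fun i => Algebra.trace K L (v i * v i)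
  have hdiscr : Algebra.discr K v = ∏ i, w i := by
    rw [Algebra.discr_def, ← Matrix.det_diagonal]
    congr 1
    ext i j
    rcases eq_or_ne i j with rfl | hij
    · simp [w]
    · rw [Matrix.diagonal_apply_ne _ hij, Algebra.traceMatrix_apply]
      exact hv hij
  have hprod : ∏ i, w i ≠ 0 := hdiscr ▸ Algebra.discr_not_zero_of_basis K v
  have hw : ∀ i, w i ≠ 0 := fun i => Finset.prod_ne_zero_iff.mp hprod i (Finset.mem_univ i)
  have hsq : quadraticChar K (∏ i, w i) = 1 := (quadraticChar_one_iff_isSquare hprod).mpr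
    (hdiscr ▸ Algebra.isSquare_discr_of_odd_finrank hn v (by simp))
  calc ∑ y : L, quadraticChar K (Algebra.trace K L (y ^ 2))
      = ∑ x : Fin (finrank K L) → K, quadraticChar K (0 + ∑ i, w i * x i ^ 2) := by
        refine (Fintype.sum_equiv v.equivFun.symm.toEquiv _ _ fun x => ?_).symm
        rw [zero_add, LinearEquiv.coe_toEquiv, Basis.equivFun_symm_apply,
          Algebra.trace_sq_of_isOrthoᵢ v hv]
    _ = _ := by
        rw [FiniteField.sum_quadraticChar_add_diagonal hK w hw,
          if_neg (Nat.not_even_iff_odd.mpr hn), FiniteField.nu, if_pos rfl, map_mul, hsq,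
          mul_one, map_pow]

lemma isSquare_of_isSquare_pow_of_odd {F : Type*} [Field F] {t : F} {n : ℕ} (hn : Odd n)
    (h : IsSquare (t ^ n)) : IsSquare t := by
  rcases eq_or_ne t 0 with rfl | ht
  · exact ⟨0, by simp⟩
  obtain ⟨m, rfl⟩ := hn
  obtain ⟨r, hr⟩ := h
  refine ⟨r / t ^ m, ?_⟩
  field_simp
  rw [sq r, ← hr]
  ring

lemma isSquare_algebraMap_iff {K L : Type*} [Field K] [Field L] [Algebra K L]
    [FiniteDimensional K L] (hn : Odd (finrank K L)) {t : K} :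
    IsSquare (algebraMap K L t) ↔ IsSquare t := by
  refine ⟨fun ⟨r, hr⟩ => isSquare_of_isSquare_pow_of_odd hn ⟨Algebra.norm K r, ?_⟩,
    fun h => h.map (algebraMap K L)⟩
  rw [← Algebra.norm_algebraMap, hr, map_mul]

lemma AddMonoidHom.sum_comp_of_surjective {G M R : Type*} [AddGroup G] [Fintype G] [AddGroup M]
    [Fintype M] [DecidableEq M] [AddCommMonoid R] (φ : G →+ M) (hφ : Function.Surjective φ)
    (f : M → R) : ∑ g, f (φ g) = #{g | φ g = 0} • ∑ m, f m := by
  rw [← Finset.sum_fiberwise univ φ, Finset.smul_sum]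
  refine Finset.sum_congr rfl fun m _ => ?_
  rw [Finset.sum_congr rfl fun g hg => congrArg f (Finset.mem_filter.mp hg).2, Finset.sum_const,
    AddMonoidHom.card_fiber_eq_of_mem_range φ (hφ m) (hφ 0)]

section TraceSums

variable {K L : Type*} [Field K] [Field L] [Fintype K] [Fintype L] [Algebra K L] [DecidableEq K]

lemma sum_comp_trace {R : Type*} [AddCommMonoid R] (f : K → R) :
    ∑ α : L, f (Algebra.trace K L α) = #{α : L | Algebra.trace K L α = 0} • ∑ t, f t :=
  (Algebra.trace K L).toAddMonoidHom.sum_comp_of_surjective (Algebra.trace_surjective K L) f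

lemma card_trace_eq_zero :
    #{α : L | Algebra.trace K L α = 0} = Fintype.card K ^ (finrank K L - 1) := by
  have h := sum_comp_trace (L := L) fun _ : K => 1
  simp only [Finset.sum_const, Finset.card_univ, smul_eq_mul, mul_one] at h
  rw [Module.card_eq_pow_finrank (K := K), ← pow_sub_one_mul finrank_pos.ne'] at h
  exact (Nat.eq_of_mul_eq_mul_right Fintype.card_pos h).symm

variable [DecidableEq L]

lemma sum_quadraticChar_mul_ite_trace_eq_zero (hK : ringChar K ≠ 2) (hn : Odd (finrank K L)) :
    ∑ α : L, quadraticChar L α * (if Algebra.trace K L α = 0 then 1 else 0) = 0 := by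
  -- multiplying by a nonsquare `c` of `K`, which stays a nonsquare in `L`, preserves the kernel
  -- of the trace and changes the sign of `χ_L`
  obtain ⟨c, hc⟩ := FiniteField.exists_nonsquare hK
  have hc0 : c ≠ 0 := by rintro rfl; exact hc ⟨0, by simp⟩
  have hχc : quadraticChar L (algebraMap K L c) = -1 :=
    quadraticChar_neg_one_iff_not_isSquare.mpr ((isSquare_algebraMap_iff hn).not.mpr hc)
  have hscale := Fintype.sum_equiv (Equiv.mulLeft₀ (algebraMap K L c) (by simpa using hc0))
    (fun α => quadraticChar L (algebraMap K L c * α)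
      * (if Algebra.trace K L (algebraMap K L c * α) = 0 then 1 else 0))
    (fun α => quadraticChar L α * (if Algebra.trace K L α = 0 then 1 else 0)) fun _ => rfl
  have htrace : ∀ α, Algebra.trace K L (algebraMap K L c * α) = c * Algebra.trace K L α :=
    fun α => by rw [← Algebra.smul_def, map_smul, smul_eq_mul]
  simp only [htrace, mul_eq_zero, hc0, false_or, map_mul, hχc, neg_mul, one_mul,
    Finset.sum_neg_distrib] at hscale
  linarith

end TraceSums

lemma FiniteField.two_mul_ite_isSquare {F : Type*} [Field F] [Fintype F] [DecidableEq F] (a : F) :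
    2 * (if IsSquare a then 1 else 0) = 1 + quadraticChar F a + if a = 0 then 1 else 0 := by
  rcases eq_or_ne a 0 with rfl | ha
  · simp
  by_cases hsq : IsSquare a
  · rw [if_pos hsq, (quadraticChar_one_iff_isSquare ha).mpr hsq, if_neg ha]; rfl
  · rw [if_neg hsq, quadraticChar_neg_one_iff_not_isSquare.mpr hsq, if_neg ha]; rfl

section Count

variable {K L : Type*} [Field K] [Field L] [Fintype K] [Fintype L] [Algebra K L] [DecidableEq K]
  [DecidableEq L]

lemma sum_quadraticChar_mul_quadraticChar_trace (hK : ringChar K ≠ 2) (hn : Odd (finrank K L)) :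
    ∑ α : L, quadraticChar L α * quadraticChar K (Algebra.trace K L α)
      = Fintype.card K ^ (finrank K L / 2) * quadraticChar K (-1) ^ (finrank K L / 2)
          * (Fintype.card K - 1) := by
  have hL : ringChar L ≠ 2 := Algebra.ringChar_eq K L ▸ hK
  have h := FiniteField.sum_comp_sq hL fun α => quadraticChar K (Algebra.trace K L α)
  simp only [FiniteField.sum_quadraticChar_trace_sq hK hn, smul_eq_mul, add_mul, one_mul,
    Finset.sum_add_distrib, sum_comp_trace, quadraticChar_sum_zero hK, smul_zero, add_zero] at h
  exact h.symm

theorem four_mul_card_isSquare_and_isSquare_trace (hK : ringChar K ≠ 2) (hn : Odd (finrank K L)) :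
    4 * (#{α : L | IsSquare α ∧ IsSquare (Algebra.trace K L α)} : ℤ)
      = Fintype.card K ^ finrank K L + Fintype.card K ^ (finrank K L - 1)
        + Fintype.card K ^ (finrank K L / 2) * quadraticChar K (-1) ^ (finrank K L / 2)
          * (Fintype.card K - 1) + 2 := by
  have hL : ringChar L ≠ 2 := Algebra.ringChar_eq K L ▸ hK
  let δK (t : K) : ℤ := if t = 0 then 1 else 0
  let δL (α : L) : ℤ := if α = 0 then 1 else 0
  have hpoint : ∀ α : L, 4 * (if IsSquare α ∧ IsSquare (Algebra.trace K L α) then 1 else 0 : ℤ)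
      = 1 + quadraticChar K (Algebra.trace K L α) + δK (Algebra.trace K L α) + quadraticChar L α
        + quadraticChar L α * quadraticChar K (Algebra.trace K L α)
        + quadraticChar L α * δK (Algebra.trace K L α)
        + δL α * (1 + quadraticChar K (Algebra.trace K L α) + δK (Algebra.trace K L α)) :=
    fun α => by
      have h4 : (4 : ℤ) * (if IsSquare α ∧ IsSquare (Algebra.trace K L α) then 1 else 0)
          = (2 * if IsSquare α then 1 else 0)
            * (2 * if IsSquare (Algebra.trace K L α) then 1 else 0) := by
        by_cases hα : IsSquare α <;> by_cases hT : IsSquare (Algebra.trace K L α) <;>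
          simp [hα, hT]
      rw [h4, FiniteField.two_mul_ite_isSquare, FiniteField.two_mul_ite_isSquare]
      ring
  have hδK : ∑ t, δK t = 1 := by simp [δK]
  have hδL : ∑ α, δL α * (1 + quadraticChar K (Algebra.trace K L α) + δK (Algebra.trace K L α))
      = 2 := by
    simp only [δL, δK, ite_mul, one_mul, zero_mul, Finset.sum_ite_eq', Finset.mem_univ, if_true,
      map_zero, MulChar.map_zero]
    norm_num
  rw [Finset.natCast_card_filter, Finset.mul_sum, Finset.sum_congr rfl fun α _ => hpoint α]
  simp only [Finset.sum_add_distrib]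
  rw [sum_comp_trace (quadraticChar K), sum_comp_trace δK, quadraticChar_sum_zero hK,
    quadraticChar_sum_zero hL, hδK, sum_quadraticChar_mul_quadraticChar_trace hK hn,
    sum_quadraticChar_mul_ite_trace_eq_zero hK hn, hδL, card_trace_eq_zero, Finset.sum_const,
    Finset.card_univ, Module.card_eq_pow_finrank (K := K) (V := L)]
  ring

end Count

lemma tauC_sq {p : ℕ} (hp : Odd p) : tauC p ^ 2 = ((ZMod.χ₄ p : ℤ) : ℂ) := by
  have hp4 : p % 4 = 1 ∨ p % 4 = 3 := by rcases hp with ⟨k, rfl⟩; omega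
  rcases hp4 with h | h
  · simp [tauC, h, ZMod.χ₄_nat_one_mod_four h]
  · simp [tauC, h, ZMod.χ₄_nat_three_mod_four h]

lemma tauC_pow_mul_two {p s q : ℕ} (hp : Odd p) (hq : q = p ^ s) (m : ℕ) :
    tauC p ^ (s * (2 * m)) = ((ZMod.χ₄ q : ℤ) : ℂ) ^ m := by
  rw [mul_left_comm, pow_mul, tauC_sq hp, hq, Nat.cast_pow, map_pow, pow_mul]
  push_cast
  ring

theorem count_double_quadratic_residues_general (p s n : ℕ) (hp : Odd p)
    (hnodd : Odd n) (q : ℕ) (hq : q = p ^ s)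
    (Fq Fqn : Type) [Field Fq] [Field Fqn] [Fintype Fq] [Fintype Fqn] [Algebra Fq Fqn]
    (hcard : Fintype.card Fq = q) (hcardn : Fintype.card Fqn = q ^ n) :
    (Nat.card {α : Fqn // (∃ y : Fqn, y ^ 2 = α) ∧
        ∃ y : Fqn, y ^ 2 = algebraMap Fq Fqn (Algebra.trace Fq Fqn α)} : ℂ)
      = ((q : ℂ) ^ n + (q : ℂ) ^ (n - 1)
          + tauC p ^ (s * (n - 1)) * ((q : ℂ) - 1) * (q : ℂ) ^ ((n - 1) / 2) + 2) / 4 := by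
  classical
  have hK : ringChar Fq ≠ 2 := by
    rw [Ne, FiniteField.even_card_iff_char_two, hcard, hq, Nat.odd_iff.mp hp.pow]
    omega
  have hfinrank : finrank Fq Fqn = n := by
    refine Nat.pow_right_injective (hcard ▸ Fintype.one_lt_card) ?_
    change q ^ finrank Fq Fqn = q ^ n
    rw [← hcard, ← Module.card_eq_pow_finrank, hcardn, hcard]
  have hcount : Nat.card {α : Fqn // (∃ y : Fqn, y ^ 2 = α) ∧
      ∃ y : Fqn, y ^ 2 = algebraMap Fq Fqn (Algebra.trace Fq Fqn α)}
      = #{α : Fqn | IsSquare α ∧ IsSquare (Algebra.trace Fq Fqn α)} := by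
    rw [Nat.card_eq_fintype_card, Fintype.card_subtype]
    simp only [← isSquare_algebraMap_iff (hfinrank ▸ hnodd), isSquare_iff_exists_sq, eq_comm]
  have h4 := four_mul_card_isSquare_and_isSquare_trace hK (hfinrank ▸ hnodd)
  obtain ⟨m, rfl⟩ := hnodd
  rw [hfinrank, quadraticChar_neg_one hK, hcard, show (2 * m + 1) / 2 = m by omega] at h4
  rw [hcount, show 2 * m + 1 - 1 = 2 * m by omega, show 2 * m / 2 = m by omega,
    tauC_pow_mul_two hp hq, eq_div_iff (by norm_num : (4 : ℂ) ≠ 0)]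
  have h4C := congrArg (Int.cast : ℤ → ℂ) h4
  push_cast at h4C
  linear_combination h4C

theorem count_double_quadratic_residues (p s n : ℕ) [Fact p.Prime] (hp : Odd p) (hs : 0 < s)
    (hn : 0 < n) (hnodd : Odd n) (q : ℕ) (hq : q = p ^ s)
    (Fq Fqn : Type) [Field Fq] [Field Fqn] [Fintype Fq] [Fintype Fqn] [Algebra Fq Fqn]
    (hcard : Fintype.card Fq = q) (hcardn : Fintype.card Fqn = q ^ n) :
    (Nat.card {α : Fqn // (∃ y : Fqn, y ^ 2 = α) ∧
        ∃ y : Fqn, y ^ 2 = algebraMap Fq Fqn (Algebra.trace Fq Fqn α)} : ℂ)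
      = ((q : ℂ) ^ n + (q : ℂ) ^ (n - 1)
          + tauC p ^ (s * (n - 1)) * ((q : ℂ) - 1) * (q : ℂ) ^ ((n - 1) / 2) + 2) / 4 :=
  count_double_quadratic_residues_general p s n hp hnodd q hq Fq Fqn hcard hcardn
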